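/- Let A_ρ ⊆ M_n(ℂ) be a structural matrix algebra such that every central class of A_ρ has at least 2 elements, and let φ : A_ρ → M_n(ℂ) be an injective map satisfying φ(X ∘ Y) = φ(X) ∘ φ(Y) for all X, Y ∈ A_ρ, where X ∘ Y = (1/2)(XY + YX). Then there exist an invertible matrix T ∈ M_n(ℂ), a transitive map g : ρ → ℂ^×, for each central class C an injective ring homomorphism ω_C : ℂ → ℂ, and for each central class C a choice ε_C ∈ {identity, transpose}, such that for every X ∈ A_ρ, φ(X) = T · g*( Σ_C (ω_C(P_C X))^{ε_C} ) · T⁻¹, where for a matrix Y supported in ρ, g*(Y) is the matrix with entries g(i,j)·Y_{ij} on ρ and 0 elsewhere, ω_C is applied entrywise, P_C = Σ_{i∈C} E_{ii}, and Y^{ε_C} is Y or its transpose according to ε_C. -/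

import Mathlib

/-!
Write `E_ij` for the matrix units. The Jordan relations between `φ 0` and the `φ E_ii` make
`φ 0` and the `φ E_ii - φ 0` orthogonal idempotents; in `M_n(ℂ)` there is no room for `n + 1`
nonzero ones, so `φ 0 = 0` and the `φ E_ii` are simultaneously conjugate to the `E_ii`.

For the normalized map `ψ = T⁻¹ φ T`, Jordan multiplication by the `E_kk` (Peirce projections)
commutes with `ψ`. Hence an off-diagonal entry `ψ(X)_pq` only depends on `X_pq` and `X_qp`,
`ψ (c E_ii) = d_i(c) E_ii` with `d_i` multiplicative, and for an edge `i ≠ j` the image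
`ψ (c E_ij)` is a multiple of `E_ij` or of `E_ji`, the same choice for all edges through a
vertex. Comparing `E_kk ∘ E_ij = E_ij / 2` on both sides shows that this multiple is
`g_ij d_i(c)` and that `d_i = d_j`. Jordan multiplication by `E_ab` along an edge then gives
`ψ(Y)_aa + ψ(Y)_bb = d_a(Y_aa + Y_bb)`, from which follow both the diagonal of `ψ X` and the
additivity of `d_i`. Finally `E_ij ∘ E_jk` yields the cocycle identity for `g`, and `X ∘ E_qp`
the entries of `ψ X` at pairs `p, q` related both ways.
-/

/-- The structural matrix algebra determined by a quasi-order `ρ` on `Fin n`. -/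
def structuralMatrixAlgebra {n : ℕ} (ρ : Fin n → Fin n → Prop) :
    Set (Matrix (Fin n) (Fin n) ℂ) :=
  {X | ∀ i j, ¬ ρ i j → X i j = 0}

/-- The equivalence relation `≈` whose classes are the central classes of `A_ρ`:
the reflexive-transitive closure of `i ≈₀ j ⟺ (i,j) ∈ ρ ∨ (j,i) ∈ ρ`. -/
def centralRel {n : ℕ} (ρ : Fin n → Fin n → Prop) : Fin n → Fin n → Prop :=
  Relation.ReflTransGen (fun a b => ρ a b ∨ ρ b a)

/-- The normalized Jordan product `X ∘ Y = (1/2)(XY + YX)`. -/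
noncomputable def njord {n : ℕ} (X Y : Matrix (Fin n) (Fin n) ℂ) : Matrix (Fin n) (Fin n) ℂ :=
  (1 / 2 : ℂ) • (X * Y + Y * X)

open Matrix

theorem IsIdempotentElem.commute_of_commute_mul_add_mul {R : Type*} [Ring R] {e f : R}
    (he : IsIdempotentElem e) (h : Commute e (e * f + f * e)) : Commute e f := by
  have h' : e * f + e * f * e = e * f * e + f * e := by
    have := h.eq
    rwa [mul_add, ← mul_assoc, he.eq, ← mul_assoc, add_mul, mul_assoc f, he.eq] at this
  exact add_right_cancel (h'.trans (add_comm _ _))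

theorem IsIdempotentElem.mul_eq_zero_of_mul_add_mul_eq_zero {R : Type*} [Ring R]
    [IsAddTorsionFree R] {e f : R} (he : IsIdempotentElem e) (h : e * f + f * e = 0) :
    e * f = 0 := by
  have hc := he.commute_of_commute_mul_add_mul (h ▸ Commute.zero_right e)
  rw [← hc.eq, ← two_nsmul] at h
  exact (nsmul_eq_zero_iff_right two_ne_zero).mp h

theorem IsIdempotentElem.mul_eq_self_of_mul_add_mul_eq_two_nsmul {R : Type*} [Ring R]
    [IsAddTorsionFree R] {e f : R} (he : IsIdempotentElem e) (h : e * f + f * e = 2 • e) :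
    e * f = e ∧ f * e = e := by
  have hc := he.commute_of_commute_mul_add_mul (h ▸ (Commute.refl e).smul_right 2)
  rw [← hc.eq, ← two_nsmul] at h
  have hef : e * f = e := IsAddTorsionFree.nsmul_right_injective two_ne_zero h
  exact ⟨hef, hc.eq ▸ hef⟩

theorem OrthogonalIdempotents.exists_linearIndependent_mulVec {ι m K : Type*} [Fintype ι]
    [Fintype m] [DecidableEq m] [DecidableEq ι] [Field K] {e : ι → Matrix m m K}
    (he : OrthogonalIdempotents e) (hne : ∀ i, e i ≠ 0) :
    ∃ v : ι → m → K, LinearIndependent K v ∧ ∀ i j, e i *ᵥ v j = if i = j then v j else 0 := by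
  have hw : ∀ i, ∃ w, e i *ᵥ w ≠ 0 := fun i => by
    by_contra! h
    exact hne i (ext_iff_mulVec.mpr fun w => by simp [h])
  choose w hw using hw
  have hev : ∀ i j, e i *ᵥ (e j *ᵥ w j) = if i = j then e j *ᵥ w j else 0 := fun i j => by
    rw [mulVec_mulVec, he.mul_eq]
    split_ifs with h <;> simp [h]
  refine ⟨fun j => e j *ᵥ w j, Fintype.linearIndependent_iff.mpr fun c hc i => ?_, hev⟩
  have := congrArg (e i *ᵥ ·) hc
  simp only [mulVec_sum, mulVec_smul, hev, smul_ite, smul_zero, Finset.sum_ite_eq,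
    Finset.mem_univ, if_true, mulVec_zero] at this
  exact (smul_eq_zero.mp this).resolve_right (hw i)

theorem OrthogonalIdempotents.card_le {ι m K : Type*} [Fintype ι] [Fintype m] [DecidableEq m]
    [Field K] {e : ι → Matrix m m K} (he : OrthogonalIdempotents e) (hne : ∀ i, e i ≠ 0) :
    Fintype.card ι ≤ Fintype.card m := by
  classical
  obtain ⟨v, hv, -⟩ := he.exists_linearIndependent_mulVec hne
  simpa using hv.fintype_card_le_finrank

theorem OrthogonalIdempotents.exists_isUnit_mul_eq {m K : Type*} [Fintype m] [DecidableEq m]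
    [Field K] {e : m → Matrix m m K} (he : OrthogonalIdempotents e) (hne : ∀ i, e i ≠ 0) :
    ∃ T : Matrix m m K, IsUnit T ∧ ∀ i, e i * T = T * single i i 1 := by
  obtain ⟨v, hv, hev⟩ := he.exists_linearIndependent_mulVec hne
  refine ⟨(of v)ᵀ, linearIndependent_cols_iff_isUnit.mp hv, fun i => ?_⟩
  ext p k
  have hcol : (e i * (of v)ᵀ) p k = (e i *ᵥ v k) p := rfl
  rw [hcol, hev]
  by_cases hik : i = k
  · subst hik
    simp
  · simp [hik, mul_single_apply_of_ne _ _ _ _ _ (Ne.symm hik)]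

theorem OrthogonalIdempotents.option_elim_sub {R ι : Type*} [Ring R] [IsAddTorsionFree R]
    [Fintype ι] {q : R} {p : ι → R} (hq : IsIdempotentElem q) (hp : ∀ i, IsIdempotentElem (p i))
    (hqp : ∀ i, q * p i + p i * q = 2 • q)
    (hpp : Pairwise fun i j => p i * p j + p j * p i = 2 • q) :
    OrthogonalIdempotents (Option.elim · q fun i => p i - q) := by
  have hqp' i := hq.mul_eq_self_of_mul_add_mul_eq_two_nsmul (hqp i)
  have hidem : ∀ i, IsIdempotentElem (p i - q) := fun i => by
    simp only [IsIdempotentElem, sub_mul, mul_sub, (hp i).eq, hq.eq, (hqp' i).1, (hqp' i).2]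
    abel
  refine OrthogonalIdempotents.option ⟨hidem, fun i j hij => ?_⟩ q hq ?_ ?_
  · refine (hidem i).mul_eq_zero_of_mul_add_mul_eq_zero ?_
    have := hpp hij
    simp only [sub_mul, mul_sub, hq.eq, (hqp' i).1, (hqp' i).2, (hqp' j).1, (hqp' j).2]
    rw [two_nsmul, ← sub_eq_zero] at this
    rw [← this]
    abel
  · simp only [Finset.mul_sum, mul_sub, (hqp' _).1, hq.eq, sub_self, Finset.sum_const_zero]
  · simp only [Finset.sum_mul, sub_mul, (hqp' _).2, hq.eq, sub_self, Finset.sum_const_zero]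

section Jordan

variable {n : ℕ}

theorem njord_self (X : Matrix (Fin n) (Fin n) ℂ) : njord X X = X * X := by
  rw [njord, ← two_smul ℂ, smul_smul]
  norm_num

theorem njord_eq_iff {X Y Z : Matrix (Fin n) (Fin n) ℂ} :
    njord X Y = Z ↔ X * Y + Y * X = 2 • Z := by
  rw [njord, two_nsmul, ← two_smul ℂ]
  constructor <;> intro h
  · rw [← h, smul_smul]; norm_num
  · rw [h, smul_smul]; norm_num

theorem njord_zero_left (X : Matrix (Fin n) (Fin n) ℂ) : njord 0 X = 0 := by
  simp [njord]

theorem njord_transpose (X Y : Matrix (Fin n) (Fin n) ℂ) : njord Xᵀ Yᵀ = (njord X Y)ᵀ := by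
  simp only [njord, transpose_smul, transpose_add, transpose_mul, add_comm]

theorem njord_conj {T : Matrix (Fin n) (Fin n) ℂ} (hT : IsUnit T)
    (X Y : Matrix (Fin n) (Fin n) ℂ) :
    njord (T⁻¹ * X * T) (T⁻¹ * Y * T) = T⁻¹ * njord X Y * T := by
  have hT' := (isUnit_iff_isUnit_det T).mp hT
  simp only [njord, Matrix.mul_smul, Matrix.smul_mul, Matrix.mul_add, Matrix.add_mul,
    Matrix.mul_assoc, mul_nonsing_inv_cancel_left _ _ hT']

theorem njord_single_single (i j k l : Fin n) (a b : ℂ) :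
    njord (single i j a) (single k l b) =
      (1 / 2 : ℂ) • ((if j = k then single i l (a * b) else 0) +
        (if l = i then single k j (b * a) else 0)) := by
  rw [njord]
  congr 2 <;> split_ifs with h <;> simp [h, single_mul_single_of_ne]

theorem njord_single_single_eq_zero_iff {a b : ℂ} (ha : a ≠ 0) (hb : b ≠ 0) (i j k l : Fin n) :
    njord (single i j a) (single k l b) = 0 ↔ j ≠ k ∧ l ≠ i := by
  have hab : a * b ≠ 0 := mul_ne_zero ha hb
  rw [njord_single_single]
  constructor
  · intro h
    constructor
    · rintro rfl
      have := congrFun (congrFun h i) l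
      clear h
      by_cases hli : l = i <;> by_cases hji : j = i <;>
        simp_all [mul_comm b a]
    · rintro rfl
      have := congrFun (congrFun h k) j
      clear h
      by_cases hjk : j = k <;> by_cases hlk : l = k <;>
        simp_all [mul_comm b a]
  · rintro ⟨hjk, hli⟩
    simp [hjk, hli]

theorem njord_single_diag_single {i j k : Fin n} (hij : i ≠ j) (hk : k = i ∨ k = j) (x c : ℂ) :
    njord (single k k x) (single i j c) = single i j (x * c / 2) := by
  rw [njord_single_single]
  rcases hk with rfl | rfl <;> simp [Ne.symm hij] <;> ring_nf

theorem njord_single_self_single_self (i : Fin n) (x c : ℂ) :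
    njord (single i i x) (single i i c) = single i i (x * c) := by
  rw [njord_single_single]
  simp [mul_comm c x, ← two_smul ℂ (single i i (x * c))]

theorem njord_single_single_self_of_ne {i j : Fin n} (hij : i ≠ j) (c d : ℂ) :
    njord (single i j c) (single i j d) = 0 := by
  simp [njord_single_single, Ne.symm hij]

theorem njord_apply (X Y : Matrix (Fin n) (Fin n) ℂ) (p q : Fin n) :
    njord X Y p q = ((X * Y) p q + (Y * X) p q) / 2 := by
  simp [njord]
  ring

theorem njord_single_diag_apply (k : Fin n) (M : Matrix (Fin n) (Fin n) ℂ) (p q : Fin n) :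
    njord (single k k 1) M p q =
      ((if k = p then M k q else 0) + (if k = q then M p k else 0)) / 2 := by
  rw [njord_apply]
  congr 2
  · split_ifs with h
    · subst h; simp
    · exact single_mul_apply_of_ne _ _ _ _ _ (Ne.symm h) _
  · split_ifs with h
    · subst h; simp
    · exact mul_single_apply_of_ne _ _ _ _ _ (Ne.symm h) _

theorem njord_single_diag_apply_self (k : Fin n) (M : Matrix (Fin n) (Fin n) ℂ) :
    njord (single k k 1) M k k = M k k := by
  simp [njord_single_diag_apply]

theorem njord_single_diag_apply_of_ne {k p q : Fin n} (hp : p ≠ k) (hq : q ≠ k)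
    (M : Matrix (Fin n) (Fin n) ℂ) : njord (single k k 1) M p q = 0 := by
  simp [njord_single_diag_apply, Ne.symm hp, Ne.symm hq]

theorem njord_single_diag_njord_single_diag {i j : Fin n} (hij : i ≠ j)
    (M : Matrix (Fin n) (Fin n) ℂ) :
    njord (single i i 1) (njord (single j j 1) M) =
      single i j (M i j / 4) + single j i (M j i / 4) := by
  ext p q
  simp only [njord_single_diag_apply, Matrix.add_apply, single_apply]
  by_cases hpi : i = p <;> by_cases hqi : i = q <;> by_cases hpj : j = p <;>
    by_cases hqj : j = q <;> subst_vars <;> simp_all <;> ring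

theorem njord_single_apply_same (M : Matrix (Fin n) (Fin n) ℂ) (a b : Fin n) (c : ℂ) :
    njord M (single a b c) a b = (M a a + M b b) * c / 2 := by
  rw [njord_apply]
  simp
  ring

theorem njord_single_apply_swap {a b : Fin n} (hab : a ≠ b) (M : Matrix (Fin n) (Fin n) ℂ)
    (c : ℂ) : njord M (single a b c) b a = 0 := by
  simp [njord_apply, hab, Ne.symm hab]

theorem njord_single_apply_self_of_ne {p q : Fin n} (hqp : q ≠ p) (M : Matrix (Fin n) (Fin n) ℂ)
    (c : ℂ) : njord M (single q p c) p p = M p q * c / 2 := by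
  simp [njord_apply, Ne.symm hqp]

end Jordan

section TransposeIf

variable {m α : Type*}

def transposeIf (b : Bool) (M : Matrix m m α) : Matrix m m α :=
  bif b then Mᵀ else M

@[simp]
theorem transposeIf_false (M : Matrix m m α) : transposeIf false M = M := rfl

@[simp]
theorem transposeIf_true (M : Matrix m m α) : transposeIf true M = Mᵀ := rfl

@[simp]
theorem transposeIf_transposeIf (b : Bool) (M : Matrix m m α) :
    transposeIf b (transposeIf b M) = M := by
  cases b <;> simp

theorem transposeIf_injective (b : Bool) : Function.Injective (transposeIf (m := m) (α := α) b) :=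
  Function.LeftInverse.injective (transposeIf_transposeIf b)

@[simp]
theorem transposeIf_apply_self (b : Bool) (M : Matrix m m α) (i : m) :
    transposeIf b M i i = M i i := by
  cases b <;> rfl

theorem transposeIf_not (b : Bool) (M : Matrix m m α) :
    transposeIf (!b) M = transposeIf b Mᵀ := by
  cases b <;> simp

@[simp]
theorem transposeIf_zero [Zero α] (b : Bool) : transposeIf b (0 : Matrix m m α) = 0 := by
  cases b <;> simp

@[simp]
theorem transposeIf_single_self [DecidableEq m] [Zero α] (b : Bool) (i : m) (c : α) :
    transposeIf b (single i i c) = single i i c := by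
  cases b <;> simp

theorem njord_transposeIf {n : ℕ} (b : Bool) (X Y : Matrix (Fin n) (Fin n) ℂ) :
    njord (transposeIf b X) (transposeIf b Y) = transposeIf b (njord X Y) := by
  cases b
  · rfl
  · exact njord_transpose X Y

theorem transposeIf_njord_transposeIf {n : ℕ} (b : Bool) (X Y : Matrix (Fin n) (Fin n) ℂ) :
    transposeIf b (njord X (transposeIf b Y)) = njord (transposeIf b X) Y := by
  rw [← njord_transposeIf, transposeIf_transposeIf]

end TransposeIf

section StructuralMatrixAlgebra

variable {n : ℕ} {ρ : Fin n → Fin n → Prop}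

theorem single_mem_structuralMatrixAlgebra {i j : Fin n} (h : ρ i j) (c : ℂ) :
    single i j c ∈ structuralMatrixAlgebra ρ := fun _ _ hpq =>
  single_apply_of_ne _ _ _ _ _ fun ⟨hp, hq⟩ => hpq (hp ▸ hq ▸ h)

theorem zero_mem_structuralMatrixAlgebra :
    (0 : Matrix (Fin n) (Fin n) ℂ) ∈ structuralMatrixAlgebra ρ :=
  fun _ _ _ => rfl

theorem add_mem_structuralMatrixAlgebra {X Y : Matrix (Fin n) (Fin n) ℂ}
    (hX : X ∈ structuralMatrixAlgebra ρ) (hY : Y ∈ structuralMatrixAlgebra ρ) :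
    X + Y ∈ structuralMatrixAlgebra ρ := fun i j h => by
  rw [Matrix.add_apply, hX i j h, hY i j h, add_zero]

theorem njord_mem_structuralMatrixAlgebra (htrans : ∀ i j k, ρ i j → ρ j k → ρ i k)
    {X Y : Matrix (Fin n) (Fin n) ℂ}
    (hX : X ∈ structuralMatrixAlgebra ρ) (hY : Y ∈ structuralMatrixAlgebra ρ) :
    njord X Y ∈ structuralMatrixAlgebra ρ := by
  have hmul : ∀ {A B : Matrix (Fin n) (Fin n) ℂ}, A ∈ structuralMatrixAlgebra ρ →
      B ∈ structuralMatrixAlgebra ρ → A * B ∈ structuralMatrixAlgebra ρ :=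
    fun {A B} hA hB i j hij => by
      rw [mul_apply]
      refine Finset.sum_eq_zero fun k _ => ?_
      by_cases hik : ρ i k
      · rw [hB k j fun hkj => hij (htrans i k j hik hkj), mul_zero]
      · rw [hA i k hik, zero_mul]
  intro i j hij
  rw [njord, Matrix.smul_apply, Matrix.add_apply, hmul hX hY i j hij, hmul hY hX i j hij,
    add_zero, smul_zero]

theorem eq_of_centralRel {β : Type*} {f : Fin n → β} (hf : ∀ i j, ρ i j → i ≠ j → f i = f j)
    {i j : Fin n} (h : centralRel ρ i j) : f i = f j := by
  induction h with
  | refl => rfl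
  | @tail b c _ hbc ih =>
    rw [ih]
    by_cases hbc' : b = c
    · rw [hbc']
    · rcases hbc with h | h
      · exact hf b c h hbc'
      · exact (hf c b h (Ne.symm hbc')).symm

theorem exists_adj_of_centralRel {i j : Fin n} (h : centralRel ρ i j) (hne : j ≠ i) :
    ∃ k ≠ i, ρ i k ∨ ρ k i := by
  contrapose! hne
  induction h with
  | refl => rfl
  | @tail b c _ hbc ih =>
    subst ih
    by_contra hc
    rcases hbc with h | h
    · exact (hne c hc).1 h
    · exact (hne c hc).2 h

end StructuralMatrixAlgebra

section NormalizedJordanMap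

variable {n : ℕ}

structure IsNormalizedJordanMap (ρ : Fin n → Fin n → Prop)
    (ψ : Matrix (Fin n) (Fin n) ℂ → Matrix (Fin n) (Fin n) ℂ) : Prop where
  refl : ∀ i, ρ i i
  trans : ∀ i j k, ρ i j → ρ j k → ρ i k
  map_njord : ∀ X ∈ structuralMatrixAlgebra ρ, ∀ Y ∈ structuralMatrixAlgebra ρ,
    ψ (njord X Y) = njord (ψ X) (ψ Y)
  injOn : Set.InjOn ψ (structuralMatrixAlgebra ρ)
  map_zero : ψ 0 = 0
  map_single_diag : ∀ i, ψ (single i i 1) = single i i 1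

variable (ψ : Matrix (Fin n) (Fin n) ℂ → Matrix (Fin n) (Fin n) ℂ)

noncomputable def diagCoeff (i : Fin n) (c : ℂ) : ℂ :=
  ψ (single i i c) i i

/-- `ψ E_ij` turns out to be a multiple of `E_ij` or of `E_ji` (`map_single`); this flags the
second case. -/
noncomputable def transposes (i j : Fin n) : Bool :=
  ψ (single i j 1) i j = 0

noncomputable def edgeCoeff (i j : Fin n) (c : ℂ) : ℂ :=
  transposeIf (transposes ψ i j) (ψ (single i j c)) i j

open Classical in
noncomputable def vertexTransposes (ρ : Fin n → Fin n → Prop) (p : Fin n) : Bool :=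
  ∃ q ≠ p, (ρ p q ∧ transposes ψ p q) ∨ (ρ q p ∧ transposes ψ q p)

theorem edgeCoeff_self (i : Fin n) (c : ℂ) : edgeCoeff ψ i i c = diagCoeff ψ i c :=
  transposeIf_apply_self _ _ _

end NormalizedJordanMap

namespace IsNormalizedJordanMap

variable {n : ℕ} {ρ : Fin n → Fin n → Prop}
  {ψ : Matrix (Fin n) (Fin n) ℂ → Matrix (Fin n) (Fin n) ℂ} {X Y : Matrix (Fin n) (Fin n) ℂ}

theorem map_njord_single_diag (hψ : IsNormalizedJordanMap ρ ψ)
    (hX : X ∈ structuralMatrixAlgebra ρ) (k : Fin n) :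
    ψ (njord (single k k 1) X) = njord (single k k 1) (ψ X) := by
  rw [hψ.map_njord _ (single_mem_structuralMatrixAlgebra (hψ.refl k) 1) X hX, hψ.map_single_diag]

theorem njord_single_diag_mem (hψ : IsNormalizedJordanMap ρ ψ)
    (hX : X ∈ structuralMatrixAlgebra ρ) (k : Fin n) :
    njord (single k k 1) X ∈ structuralMatrixAlgebra ρ :=
  njord_mem_structuralMatrixAlgebra hψ.trans (single_mem_structuralMatrixAlgebra (hψ.refl k) 1) hX

theorem map_eq_zero_iff (hψ : IsNormalizedJordanMap ρ ψ) (hX : X ∈ structuralMatrixAlgebra ρ) :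
    ψ X = 0 ↔ X = 0 :=
  ⟨fun h => hψ.injOn hX zero_mem_structuralMatrixAlgebra (h.trans hψ.map_zero.symm),
    fun h => h ▸ hψ.map_zero⟩

theorem apply_self_eq (hψ : IsNormalizedJordanMap ρ ψ) (hX : X ∈ structuralMatrixAlgebra ρ)
    (k : Fin n) : ψ X k k = ψ (njord (single k k 1) X) k k := by
  rw [hψ.map_njord_single_diag hX, njord_single_diag_apply_self]

theorem apply_self_njord_single_diag_eq_zero (hψ : IsNormalizedJordanMap ρ ψ)
    (hX : X ∈ structuralMatrixAlgebra ρ) {i k : Fin n} (hik : i ≠ k) :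
    ψ (njord (single k k 1) X) i i = 0 := by
  rw [hψ.map_njord_single_diag hX, njord_single_diag_apply_of_ne hik hik]

/-- Both sides are read off the Peirce projection `E_pp ∘ (E_qq ∘ ·)`, which commutes with `ψ`
and only sees the entries at `(p, q)` and `(q, p)`. -/
theorem apply_eq_of_apply_eq (hψ : IsNormalizedJordanMap ρ ψ) (hX : X ∈ structuralMatrixAlgebra ρ)
    (hY : Y ∈ structuralMatrixAlgebra ρ) {p q : Fin n} (hpq : p ≠ q) (h₁ : X p q = Y p q)
    (h₂ : X q p = Y q p) : ψ X p q = ψ Y p q := by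
  have key : ∀ Z ∈ structuralMatrixAlgebra ρ,
      ψ Z p q = 4 * ψ (njord (single p p 1) (njord (single q q 1) Z)) p q := by
    intro Z hZ
    rw [hψ.map_njord_single_diag (hψ.njord_single_diag_mem hZ q), hψ.map_njord_single_diag hZ,
      njord_single_diag_njord_single_diag hpq]
    simp [hpq]
    ring
  rw [key X hX, key Y hY, njord_single_diag_njord_single_diag hpq,
    njord_single_diag_njord_single_diag hpq, h₁, h₂]

theorem apply_eq_zero_of_ne (hψ : IsNormalizedJordanMap ρ ψ) (hX : X ∈ structuralMatrixAlgebra ρ)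
    {p q : Fin n} (hpq : p ≠ q) (h₁ : X p q = 0) (h₂ : X q p = 0) : ψ X p q = 0 := by
  simpa [hψ.map_zero] using hψ.apply_eq_of_apply_eq hX zero_mem_structuralMatrixAlgebra hpq h₁ h₂

theorem transposeIf_apply_eq_of_apply_eq (hψ : IsNormalizedJordanMap ρ ψ) (b : Bool)
    (hX : X ∈ structuralMatrixAlgebra ρ) (hY : Y ∈ structuralMatrixAlgebra ρ) {p q : Fin n}
    (hpq : p ≠ q) (h₁ : X p q = Y p q) (h₂ : X q p = Y q p) :
    transposeIf b (ψ X) p q = transposeIf b (ψ Y) p q := by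
  cases b
  · exact hψ.apply_eq_of_apply_eq hX hY hpq h₁ h₂
  · exact hψ.apply_eq_of_apply_eq hX hY (Ne.symm hpq) h₂ h₁

theorem map_single_self (hψ : IsNormalizedJordanMap ρ ψ) (i : Fin n) (c : ℂ) :
    ψ (single i i c) = single i i (diagCoeff ψ i c) := by
  have hmem := single_mem_structuralMatrixAlgebra (hψ.refl i) c
  ext p q
  by_cases hpq : p = q
  · subst hpq
    by_cases hip : i = p
    · subst hip
      simp [diagCoeff]
    · have := hψ.apply_self_njord_single_diag_eq_zero hmem (Ne.symm hip)
      rw [njord_single_self_single_self, one_mul] at this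
      rw [this, single_apply_of_ne _ _ _ _ _ fun h => hip h.1]
  · have hoff : ∀ {x : ℂ} {a b : Fin n}, a ≠ b → single i i x a b = 0 := fun hab =>
      single_apply_of_ne _ _ _ _ _ fun h => hab (h.1.symm.trans h.2)
    rw [hψ.apply_eq_zero_of_ne hmem hpq (hoff hpq) (hoff (Ne.symm hpq)), hoff hpq]

theorem diagCoeff_mul (hψ : IsNormalizedJordanMap ρ ψ) (i : Fin n) (x y : ℂ) :
    diagCoeff ψ i (x * y) = diagCoeff ψ i x * diagCoeff ψ i y := by
  have := hψ.map_njord _ (single_mem_structuralMatrixAlgebra (hψ.refl i) x) _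
    (single_mem_structuralMatrixAlgebra (hψ.refl i) y)
  rw [njord_single_self_single_self, hψ.map_single_self, hψ.map_single_self, hψ.map_single_self,
    njord_single_self_single_self] at this
  simpa using congrFun (congrFun this i) i

theorem diagCoeff_one (hψ : IsNormalizedJordanMap ρ ψ) (i : Fin n) : diagCoeff ψ i 1 = 1 := by
  simp [diagCoeff, hψ.map_single_diag]

theorem diagCoeff_zero (hψ : IsNormalizedJordanMap ρ ψ) (i : Fin n) : diagCoeff ψ i 0 = 0 := by
  simp [diagCoeff, hψ.map_zero]

theorem map_single_apply_eq_zero (hψ : IsNormalizedJordanMap ρ ψ) {i j : Fin n} (hij : ρ i j)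
    (hne : i ≠ j) (c : ℂ) {p q : Fin n} (h₁ : ¬(i = p ∧ j = q)) (h₂ : ¬(i = q ∧ j = p)) :
    ψ (single i j c) p q = 0 := by
  by_cases hpq : p = q
  · subst hpq
    have hmem := single_mem_structuralMatrixAlgebra hij (2 * c)
    have hhalf : ∀ {k}, k = i ∨ k = j → njord (single k k 1) (single i j (2 * c)) = single i j c :=
      fun hk => by rw [njord_single_diag_single hne hk]; ring_nf
    by_cases hpi : p = i
    · subst hpi
      rw [← hhalf (Or.inr rfl)]
      exact hψ.apply_self_njord_single_diag_eq_zero hmem hne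
    · rw [← hhalf (Or.inl rfl)]
      exact hψ.apply_self_njord_single_diag_eq_zero hmem hpi
  · exact hψ.apply_eq_zero_of_ne (single_mem_structuralMatrixAlgebra hij c) hpq
      (single_apply_of_ne _ _ _ _ _ h₁) (single_apply_of_ne _ _ _ _ _ h₂)

theorem map_single_eq_add (hψ : IsNormalizedJordanMap ρ ψ) {i j : Fin n} (hij : ρ i j)
    (hne : i ≠ j) (c : ℂ) :
    ψ (single i j c) = single i j (ψ (single i j c) i j) + single j i (ψ (single i j c) j i) := by
  ext p q
  by_cases h₁ : i = p ∧ j = q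
  · obtain ⟨rfl, rfl⟩ := h₁
    simp [hne]
  by_cases h₂ : i = q ∧ j = p
  · obtain ⟨rfl, rfl⟩ := h₂
    simp [hne]
  rw [hψ.map_single_apply_eq_zero hij hne c h₁ h₂, Matrix.add_apply,
    single_apply_of_ne _ _ _ _ _ h₁, single_apply_of_ne _ _ _ _ _ fun h => h₂ ⟨h.2, h.1⟩, add_zero]

theorem map_single_apply_mul_add (hψ : IsNormalizedJordanMap ρ ψ) {i j : Fin n} (hij : ρ i j)
    (hne : i ≠ j) (c d : ℂ) :
    ψ (single i j c) i j * ψ (single i j d) j i +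
      ψ (single i j d) i j * ψ (single i j c) j i = 0 := by
  have h := hψ.map_njord _ (single_mem_structuralMatrixAlgebra hij c) _
    (single_mem_structuralMatrixAlgebra hij d)
  rw [njord_single_single_self_of_ne hne, hψ.map_zero, hψ.map_single_eq_add hij hne c,
    hψ.map_single_eq_add hij hne d] at h
  have hii := congrFun (congrFun h i) i
  simp [njord_apply, Matrix.add_mul, Matrix.mul_add, hne, Ne.symm hne] at hii
  linear_combination -2 * hii

theorem transposeIf_map_single_apply_swap (hψ : IsNormalizedJordanMap ρ ψ) {i j : Fin n}
    (hij : ρ i j) (hne : i ≠ j) (c : ℂ) :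
    transposeIf (transposes ψ i j) (ψ (single i j c)) j i = 0 := by
  have hcross := hψ.map_single_apply_mul_add hij hne c 1
  by_cases ha : ψ (single i j 1) i j = 0
  · have hb : ψ (single i j 1) j i ≠ 0 := by
      intro hb
      have h := hψ.map_single_eq_add hij hne 1
      rw [ha, hb, single_zero, single_zero, add_zero,
        hψ.map_eq_zero_iff (single_mem_structuralMatrixAlgebra hij 1)] at h
      simpa using congrFun (congrFun h i) j
    rw [ha, zero_mul, add_zero] at hcross
    simpa [transposes, ha, hb] using hcross
  · have hb : ψ (single i j 1) j i = 0 := by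
      simpa [← two_mul, ha] using hψ.map_single_apply_mul_add hij hne 1 1
    rw [hb, mul_zero, zero_add] at hcross
    simpa [transposes, ha] using hcross

theorem map_single (hψ : IsNormalizedJordanMap ρ ψ) {i j : Fin n} (hij : ρ i j) (c : ℂ) :
    ψ (single i j c) = transposeIf (transposes ψ i j) (single i j (edgeCoeff ψ i j c)) := by
  by_cases hne : i = j
  · subst hne
    rw [transposeIf_single_self, edgeCoeff_self, hψ.map_single_self]
  rw [← transposeIf_transposeIf (transposes ψ i j) (ψ (single i j c))]
  congr 1
  ext p q
  by_cases h₁ : i = p ∧ j = q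
  · obtain ⟨rfl, rfl⟩ := h₁
    simp [edgeCoeff]
  rw [single_apply_of_ne _ _ _ _ _ h₁]
  by_cases h₂ : i = q ∧ j = p
  · obtain ⟨rfl, rfl⟩ := h₂
    exact hψ.transposeIf_map_single_apply_swap hij hne c
  cases transposes ψ i j
  · exact hψ.map_single_apply_eq_zero hij hne c h₁ h₂
  · exact hψ.map_single_apply_eq_zero hij hne c h₂ h₁

theorem edgeCoeff_ne_zero (hψ : IsNormalizedJordanMap ρ ψ) {i j : Fin n} (hij : ρ i j) {c : ℂ}
    (hc : c ≠ 0) : edgeCoeff ψ i j c ≠ 0 := by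
  intro h
  have hmap := hψ.map_single hij c
  rw [h, single_zero, transposeIf_zero,
    hψ.map_eq_zero_iff (single_mem_structuralMatrixAlgebra hij c)] at hmap
  exact hc (by simpa using congrFun (congrFun hmap i) j)

theorem edgeCoeff_div_two (hψ : IsNormalizedJordanMap ρ ψ) {i j k : Fin n} (hij : ρ i j)
    (hne : i ≠ j) (hk : k = i ∨ k = j) (c : ℂ) :
    edgeCoeff ψ i j (c / 2) = diagCoeff ψ k c * edgeCoeff ψ i j 1 / 2 := by
  have hkk : ρ k k := hψ.refl k
  have h := hψ.map_njord _ (single_mem_structuralMatrixAlgebra hkk c) _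
    (single_mem_structuralMatrixAlgebra hij 1)
  rw [njord_single_diag_single hne hk, mul_one, hψ.map_single hij, hψ.map_single hij,
    hψ.map_single_self, ← transposeIf_single_self (transposes ψ i j), njord_transposeIf,
    (transposeIf_injective _).eq_iff, njord_single_diag_single hne hk] at h
  simpa using congrFun (congrFun h i) j

theorem diagCoeff_eq_of_rel (hψ : IsNormalizedJordanMap ρ ψ) {i j : Fin n} (hij : ρ i j) :
    diagCoeff ψ i = diagCoeff ψ j := by
  by_cases hne : i = j
  · rw [hne]
  funext c
  have h := (hψ.edgeCoeff_div_two hij hne (Or.inl rfl) c).symm.trans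
    (hψ.edgeCoeff_div_two hij hne (Or.inr rfl) c)
  rwa [div_left_inj' two_ne_zero, mul_left_inj' (hψ.edgeCoeff_ne_zero hij one_ne_zero)] at h

theorem diagCoeff_eq_of_adj (hψ : IsNormalizedJordanMap ρ ψ) {i j : Fin n}
    (hadj : ρ i j ∨ ρ j i) : diagCoeff ψ i = diagCoeff ψ j :=
  hadj.elim hψ.diagCoeff_eq_of_rel fun h => (hψ.diagCoeff_eq_of_rel h).symm

theorem diagCoeff_two (hψ : IsNormalizedJordanMap ρ ψ) {i j : Fin n} (hne : j ≠ i)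
    (hadj : ρ i j ∨ ρ j i) : diagCoeff ψ i 2 = 2 := by
  wlog hij : ρ i j generalizing i j
  · rw [hψ.diagCoeff_eq_of_adj hadj]
    exact this (Ne.symm hne) hadj.symm (hadj.resolve_left hij)
  have h := hψ.edgeCoeff_div_two hij (Ne.symm hne) (Or.inl rfl) 2
  have hg := hψ.edgeCoeff_ne_zero hij one_ne_zero
  rw [div_self two_ne_zero] at h
  have hd : (diagCoeff ψ i 2 - 2) * edgeCoeff ψ i j 1 = 0 := by linear_combination -2 * h
  exact sub_eq_zero.mp ((mul_eq_zero.mp hd).resolve_right hg)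

theorem diagCoeff_div_two (hψ : IsNormalizedJordanMap ρ ψ) {i : Fin n}
    (h2 : diagCoeff ψ i 2 = 2) (c : ℂ) : diagCoeff ψ i (c / 2) = diagCoeff ψ i c / 2 := by
  conv_rhs => rw [← mul_div_cancel₀ c (two_ne_zero' ℂ), hψ.diagCoeff_mul, h2]
  ring

theorem edgeCoeff_eq_mul (hψ : IsNormalizedJordanMap ρ ψ) {i j : Fin n} (hij : ρ i j) (c : ℂ) :
    edgeCoeff ψ i j c = edgeCoeff ψ i j 1 * diagCoeff ψ i c := by
  by_cases hne : i = j
  · subst hne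
    rw [edgeCoeff_self, edgeCoeff_self, hψ.diagCoeff_one, one_mul]
  have h := hψ.edgeCoeff_div_two hij hne (Or.inl rfl) (2 * c)
  rw [mul_div_cancel_left₀ c two_ne_zero, hψ.diagCoeff_mul,
    hψ.diagCoeff_two (Ne.symm hne) (Or.inl hij)] at h
  rw [h]
  ring

/-- Along an edge `(a, b)`, the Jordan product with `E_ab` moves `Y_aa + Y_bb` to position
`(a, b)`, where `ψ` acts through `edgeCoeff`. -/
theorem apply_self_add_apply_self (hψ : IsNormalizedJordanMap ρ ψ) {a b : Fin n}
    (hadj : ρ a b ∨ ρ b a) (hne : a ≠ b) (hY : Y ∈ structuralMatrixAlgebra ρ) :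
    ψ Y a a + ψ Y b b = diagCoeff ψ a (Y a a + Y b b) := by
  wlog hab : ρ a b generalizing a b
  · rw [add_comm, add_comm (Y a a), hψ.diagCoeff_eq_of_adj hadj]
    exact this hadj.symm (Ne.symm hne) (hadj.resolve_left hab)
  set τ := transposes ψ a b
  set g := edgeCoeff ψ a b 1
  have hE := single_mem_structuralMatrixAlgebra hab (1 : ℂ)
  have hZ := njord_mem_structuralMatrixAlgebra hψ.trans hY hE
  have h₁ : transposeIf τ (ψ (njord Y (single a b 1))) a b = (ψ Y a a + ψ Y b b) * g / 2 := by
    rw [hψ.map_njord _ hY _ hE, hψ.map_single hab, transposeIf_njord_transposeIf,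
      njord_single_apply_same, transposeIf_apply_self, transposeIf_apply_self]
  have h₂ : transposeIf τ (ψ (njord Y (single a b 1))) a b =
      g * diagCoeff ψ a ((Y a a + Y b b) / 2) := by
    rw [hψ.transposeIf_apply_eq_of_apply_eq τ hZ
      (single_mem_structuralMatrixAlgebra hab ((Y a a + Y b b) / 2)) hne
      (by rw [njord_single_apply_same, single_apply_same, mul_one])
      (by rw [njord_single_apply_swap hne, single_apply_of_ne _ _ _ _ _ fun h => hne h.1]),
      hψ.map_single hab, transposeIf_transposeIf, single_apply_same, hψ.edgeCoeff_eq_mul hab]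
  rw [hψ.diagCoeff_div_two (hψ.diagCoeff_two (Ne.symm hne) hadj)] at h₂
  have h : (ψ Y a a + ψ Y b b - diagCoeff ψ a (Y a a + Y b b)) * g = 0 := by
    linear_combination 2 * h₁.symm.trans h₂
  exact sub_eq_zero.mp ((mul_eq_zero.mp h).resolve_right (hψ.edgeCoeff_ne_zero hab one_ne_zero))

theorem apply_self (hψ : IsNormalizedJordanMap ρ ψ) {i j : Fin n} (hne : j ≠ i)
    (hadj : ρ i j ∨ ρ j i) (hX : X ∈ structuralMatrixAlgebra ρ) :
    ψ X i i = diagCoeff ψ i (X i i) := by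
  have h := hψ.apply_self_add_apply_self hadj (Ne.symm hne) (hψ.njord_single_diag_mem hX i)
  rwa [hψ.apply_self_njord_single_diag_eq_zero hX hne, njord_single_diag_apply_of_ne hne hne,
    njord_single_diag_apply_self, add_zero, add_zero, ← hψ.apply_self_eq hX] at h

theorem diagCoeff_add (hψ : IsNormalizedJordanMap ρ ψ) {i j : Fin n} (hne : j ≠ i)
    (hadj : ρ i j ∨ ρ j i) (x y : ℂ) :
    diagCoeff ψ i (x + y) = diagCoeff ψ i x + diagCoeff ψ i y := by
  have hY := add_mem_structuralMatrixAlgebra (single_mem_structuralMatrixAlgebra (hψ.refl i) x)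
    (single_mem_structuralMatrixAlgebra (hψ.refl j) y)
  have h := hψ.apply_self_add_apply_self hadj (Ne.symm hne) hY
  rw [hψ.apply_self hne hadj hY, hψ.apply_self (Ne.symm hne) hadj.symm hY,
    ← hψ.diagCoeff_eq_of_adj hadj] at h
  simpa [hne, Ne.symm hne] using h.symm

noncomputable def diagRingHom (hψ : IsNormalizedJordanMap ρ ψ) {i : Fin n}
    (hi : ∃ j ≠ i, ρ i j ∨ ρ j i) : ℂ →+* ℂ where
  toFun := diagCoeff ψ i
  map_one' := hψ.diagCoeff_one i
  map_mul' := hψ.diagCoeff_mul i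
  map_zero' := hψ.diagCoeff_zero i
  map_add' := let ⟨_, hne, hadj⟩ := hi; hψ.diagCoeff_add hne hadj

/-- Two edges through a common vertex are either both transposed or both not: otherwise
`ψ` would turn a Jordan-orthogonal pair of matrix units into a non-orthogonal one or vice
versa. -/
theorem transposes_eq (hψ : IsNormalizedJordanMap ρ ψ) {i j k l : Fin n} (hij : ρ i j)
    (hkl : ρ k l) (hne₁ : i ≠ j) (hne₂ : k ≠ l) (hshare : i = k ∨ i = l ∨ j = k ∨ j = l) :
    transposes ψ i j = transposes ψ k l := by
  by_contra hτ
  have hτ' : transposes ψ k l = !transposes ψ i j := by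
    revert hτ; cases transposes ψ i j <;> cases transposes ψ k l <;> simp
  have hEij := single_mem_structuralMatrixAlgebra hij (1 : ℂ)
  have hEkl := single_mem_structuralMatrixAlgebra hkl (1 : ℂ)
  have key := hψ.map_eq_zero_iff (njord_mem_structuralMatrixAlgebra hψ.trans hEij hEkl)
  rw [hψ.map_njord _ hEij _ hEkl, hψ.map_single hij, hψ.map_single hkl, hτ', transposeIf_not,
    transpose_single, njord_transposeIf, (transposeIf_injective _).eq_iff' (transposeIf_zero _),
    njord_single_single_eq_zero_iff (hψ.edgeCoeff_ne_zero hij one_ne_zero)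
      (hψ.edgeCoeff_ne_zero hkl one_ne_zero),
    njord_single_single_eq_zero_iff one_ne_zero one_ne_zero] at key
  rcases hshare with rfl | rfl | rfl | rfl <;> simp_all [eq_comm]

theorem edgeCoeff_mul_edgeCoeff (hψ : IsNormalizedJordanMap ρ ψ) {i j k : Fin n} (hij : ρ i j)
    (hjk : ρ j k) : edgeCoeff ψ i j 1 * edgeCoeff ψ j k 1 = edgeCoeff ψ i k 1 := by
  by_cases hij' : i = j
  · subst hij'
    rw [edgeCoeff_self, hψ.diagCoeff_one, one_mul]
  by_cases hjk' : j = k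
  · subst hjk'
    rw [edgeCoeff_self, hψ.diagCoeff_one, mul_one]
  have hik := hψ.trans i j k hij hjk
  have hEij := single_mem_structuralMatrixAlgebra hij (1 : ℂ)
  have hEjk := single_mem_structuralMatrixAlgebra hjk (1 : ℂ)
  have hZ := njord_mem_structuralMatrixAlgebra hψ.trans hEij hEjk
  have hτ : transposes ψ j k = transposes ψ i j :=
    (hψ.transposes_eq hij hjk hij' hjk' (Or.inr (Or.inr (Or.inl rfl)))).symm
  have hhalf := hψ.diagCoeff_div_two (hψ.diagCoeff_two (Ne.symm hij') (Or.inl hij)) 1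
  rw [hψ.diagCoeff_one, one_div] at hhalf
  have h₁ : transposeIf (transposes ψ i j) (ψ (njord (single i j 1) (single j k 1))) i k =
      edgeCoeff ψ i j 1 * edgeCoeff ψ j k 1 / 2 := by
    rw [hψ.map_njord _ hEij _ hEjk, hψ.map_single hij, hψ.map_single hjk, hτ, njord_transposeIf,
      transposeIf_transposeIf, njord_apply]
    simp [hij']
  have h₂ : transposeIf (transposes ψ i j) (ψ (njord (single i j 1) (single j k 1))) i k =
      edgeCoeff ψ i k 1 / 2 := by
    by_cases hik' : i = k
    · subst hik'
      rw [transposeIf_apply_self, hψ.apply_self (Ne.symm hij') (Or.inl hij) hZ, njord_apply]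
      simp [Ne.symm hij', edgeCoeff_self, hψ.diagCoeff_one, hhalf]
    · have hτ' : transposes ψ i k = transposes ψ i j :=
        (hψ.transposes_eq hij hik hij' hik' (Or.inl rfl)).symm
      rw [njord_single_single, if_pos rfl, if_neg (Ne.symm hik'), add_zero, smul_single,
        hψ.map_single hik, hτ', transposeIf_transposeIf, single_apply_same,
        hψ.edgeCoeff_eq_mul hik]
      simp [hhalf, div_eq_mul_inv]
  linear_combination 2 * h₁.symm.trans h₂

theorem edgeCoeff_mul_transposeIf_apply (hψ : IsNormalizedJordanMap ρ ψ) {p q : Fin n}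
    (hqp : ρ q p) (hne : p ≠ q) (hX : X ∈ structuralMatrixAlgebra ρ) :
    edgeCoeff ψ q p 1 * transposeIf (transposes ψ q p) (ψ X) p q = diagCoeff ψ p (X p q) := by
  have hE := single_mem_structuralMatrixAlgebra hqp (1 : ℂ)
  have h := hψ.apply_self (Ne.symm hne) (Or.inr hqp)
    (njord_mem_structuralMatrixAlgebra hψ.trans hX hE)
  rw [njord_single_apply_self_of_ne (Ne.symm hne), mul_one,
    hψ.diagCoeff_div_two (hψ.diagCoeff_two (Ne.symm hne) (Or.inr hqp)),
    ← transposeIf_apply_self (transposes ψ q p) (ψ (njord X (single q p 1))) p,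
    hψ.map_njord _ hX _ hE, hψ.map_single hqp, transposeIf_njord_transposeIf,
    njord_single_apply_self_of_ne (Ne.symm hne)] at h
  linear_combination 2 * h

theorem transposeIf_apply_of_rel (hψ : IsNormalizedJordanMap ρ ψ) {p q : Fin n} (hpq : ρ p q)
    (hp : ∃ j ≠ p, ρ p j ∨ ρ j p) (hX : X ∈ structuralMatrixAlgebra ρ) :
    transposeIf (transposes ψ p q) (ψ X) p q = edgeCoeff ψ p q 1 * diagCoeff ψ p (X p q) := by
  by_cases hne : p = q
  · subst hne
    obtain ⟨j, hj, hadj⟩ := hp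
    rw [transposeIf_apply_self, edgeCoeff_self, hψ.diagCoeff_one, one_mul, hψ.apply_self hj hadj hX]
  by_cases hqp : ρ q p
  · have hτ : transposes ψ q p = transposes ψ p q :=
      hψ.transposes_eq hqp hpq (Ne.symm hne) hne (Or.inr (Or.inl rfl))
    have hinv : edgeCoeff ψ p q 1 * edgeCoeff ψ q p 1 = 1 := by
      rw [hψ.edgeCoeff_mul_edgeCoeff hpq hqp, edgeCoeff_self, hψ.diagCoeff_one]
    rw [← hψ.edgeCoeff_mul_transposeIf_apply hqp hne hX, hτ, ← mul_assoc, hinv, one_mul]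
  · rw [hψ.transposeIf_apply_eq_of_apply_eq _ hX
      (single_mem_structuralMatrixAlgebra hpq (X p q)) hne
      (single_apply_same _ _ _).symm
      (by rw [hX q p hqp, single_apply_of_ne _ _ _ _ _ fun h => hne h.1]),
      hψ.map_single hpq, transposeIf_transposeIf, single_apply_same, hψ.edgeCoeff_eq_mul hpq]

theorem transposeIf_apply_swap_of_rel (hψ : IsNormalizedJordanMap ρ ψ) {p q : Fin n}
    (hpq : ρ p q) (hqp : ¬ρ q p) (hX : X ∈ structuralMatrixAlgebra ρ) :
    transposeIf (transposes ψ p q) (ψ X) q p = 0 := by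
  have hne : p ≠ q := fun h => hqp (h ▸ hpq)
  rw [hψ.transposeIf_apply_eq_of_apply_eq _ hX (single_mem_structuralMatrixAlgebra hpq (X p q))
      (Ne.symm hne) (by rw [hX q p hqp, single_apply_of_ne _ _ _ _ _ fun h => hne h.1])
      (single_apply_same _ _ _).symm,
    hψ.map_single hpq, transposeIf_transposeIf, single_apply_of_ne _ _ _ _ _ fun h => hne h.1]

theorem transposes_eq_vertexTransposes (hψ : IsNormalizedJordanMap ρ ψ) {p q r : Fin n}
    (hpq : ρ p q) (hne : p ≠ q) (hr : r = p ∨ r = q) :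
    transposes ψ p q = vertexTransposes ψ ρ r := by
  rw [Bool.eq_iff_iff]
  simp only [vertexTransposes, decide_eq_true_eq]
  constructor
  · intro h
    rcases hr with rfl | rfl
    · exact ⟨q, Ne.symm hne, Or.inl ⟨hpq, h⟩⟩
    · exact ⟨p, hne, Or.inr ⟨hpq, h⟩⟩
  · rintro ⟨s, hs, ⟨hrs, h⟩ | ⟨hsr, h⟩⟩
    · rwa [hψ.transposes_eq hpq hrs hne (Ne.symm hs) (by rcases hr with rfl | rfl <;> simp)]
    · rwa [hψ.transposes_eq hpq hsr hne hs (by rcases hr with rfl | rfl <;> simp)]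

theorem vertexTransposes_eq_of_centralRel (hψ : IsNormalizedJordanMap ρ ψ) {i j : Fin n}
    (h : centralRel ρ i j) : vertexTransposes ψ ρ i = vertexTransposes ψ ρ j :=
  eq_of_centralRel (fun _ _ hab hne =>
    (hψ.transposes_eq_vertexTransposes hab hne (Or.inl rfl)).symm.trans
      (hψ.transposes_eq_vertexTransposes hab hne (Or.inr rfl))) h

theorem map_eq [DecidableRel ρ] (hψ : IsNormalizedJordanMap ρ ψ)
    (hadj : ∀ i, ∃ j ≠ i, ρ i j ∨ ρ j i)
    (hX : X ∈ structuralMatrixAlgebra ρ) :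
    ψ X = Matrix.of fun i j =>
      if vertexTransposes ψ ρ i then
        (if ρ j i then edgeCoeff ψ j i 1 * diagCoeff ψ j (X j i) else 0)
      else (if ρ i j then edgeCoeff ψ i j 1 * diagCoeff ψ i (X i j) else 0) := by
  ext p q
  rw [of_apply]
  by_cases hpq : p = q
  · subst hpq
    have h := hψ.transposeIf_apply_of_rel (hψ.refl p) (hadj p) hX
    rw [transposeIf_apply_self] at h
    simp [hψ.refl p, h]
  by_cases hρpq : ρ p q <;> by_cases hρqp : ρ q p
  · have h₁ := hψ.transposeIf_apply_of_rel hρpq ⟨q, Ne.symm hpq, Or.inl hρpq⟩ hX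
    have h₂ := hψ.transposeIf_apply_of_rel hρqp ⟨p, hpq, Or.inl hρqp⟩ hX
    rw [hψ.transposes_eq_vertexTransposes hρpq hpq (Or.inl rfl)] at h₁
    rw [hψ.transposes_eq_vertexTransposes hρqp (Ne.symm hpq) (Or.inr rfl)] at h₂
    revert h₁ h₂
    cases vertexTransposes ψ ρ p <;> simp +contextual [hρpq, hρqp]
  · have h₁ := hψ.transposeIf_apply_of_rel hρpq ⟨q, Ne.symm hpq, Or.inl hρpq⟩ hX
    have h₂ := hψ.transposeIf_apply_swap_of_rel hρpq hρqp hX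
    rw [hψ.transposes_eq_vertexTransposes hρpq hpq (Or.inl rfl)] at h₁ h₂
    revert h₁ h₂
    cases vertexTransposes ψ ρ p <;> simp +contextual [hρpq, hρqp]
  · have h₁ := hψ.transposeIf_apply_of_rel hρqp ⟨p, hpq, Or.inl hρqp⟩ hX
    have h₂ := hψ.transposeIf_apply_swap_of_rel hρqp hρpq hX
    rw [hψ.transposes_eq_vertexTransposes hρqp (Ne.symm hpq) (Or.inr rfl)] at h₁ h₂
    revert h₁ h₂
    cases vertexTransposes ψ ρ p <;> simp +contextual [hρpq, hρqp]
  · simp [hψ.apply_eq_zero_of_ne hX hpq (hX p q hρpq) (hX q p hρqp), hρpq, hρqp]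

end IsNormalizedJordanMap

section Normalization

variable {n : ℕ} {ρ : Fin n → Fin n → Prop}
  {φ : Matrix (Fin n) (Fin n) ℂ → Matrix (Fin n) (Fin n) ℂ}

theorem orthogonalIdempotents_option_map_single_diag (hrefl : ∀ i, ρ i i)
    (hjord : ∀ X ∈ structuralMatrixAlgebra ρ, ∀ Y ∈ structuralMatrixAlgebra ρ,
      φ (njord X Y) = njord (φ X) (φ Y)) :
    OrthogonalIdempotents (Option.elim · (φ 0) fun i => φ (single i i 1) - φ 0) := by
  have hE : ∀ i, single i i (1 : ℂ) ∈ structuralMatrixAlgebra ρ :=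
    fun i => single_mem_structuralMatrixAlgebra (hrefl i) 1
  have h0 : (0 : Matrix (Fin n) (Fin n) ℂ) ∈ structuralMatrixAlgebra ρ :=
    zero_mem_structuralMatrixAlgebra
  have : IsAddTorsionFree (Matrix (Fin n) (Fin n) ℂ) := .of_module_rat _
  refine OrthogonalIdempotents.option_elim_sub ?_ (fun i => ?_) (fun i => ?_) fun i j hij => ?_
  · have h := hjord 0 h0 0 h0
    rwa [njord_zero_left, njord_self, eq_comm] at h
  · have h := hjord _ (hE i) _ (hE i)
    rwa [njord_single_self_single_self, mul_one, njord_self, eq_comm] at h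
  · rw [← njord_eq_iff, ← hjord 0 h0 _ (hE i), njord_zero_left]
  · dsimp only
    rw [← njord_eq_iff, ← hjord _ (hE i) _ (hE j),
      (njord_single_single_eq_zero_iff one_ne_zero one_ne_zero i i j j).mpr ⟨hij, Ne.symm hij⟩]

theorem map_single_diag_sub_map_zero_ne_zero (hrefl : ∀ i, ρ i i)
    (hinj : Set.InjOn φ (structuralMatrixAlgebra ρ)) (i : Fin n) :
    φ (single i i 1) - φ 0 ≠ 0 := fun h => by
  have := hinj (single_mem_structuralMatrixAlgebra (hrefl i) 1) zero_mem_structuralMatrixAlgebra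
    (sub_eq_zero.mp h)
  simpa using congrFun (congrFun this i) i

theorem map_zero_of_njord (hrefl : ∀ i, ρ i i)
    (hjord : ∀ X ∈ structuralMatrixAlgebra ρ, ∀ Y ∈ structuralMatrixAlgebra ρ,
      φ (njord X Y) = njord (φ X) (φ Y))
    (hinj : Set.InjOn φ (structuralMatrixAlgebra ρ)) : φ 0 = 0 := by
  by_contra h
  have := (orthogonalIdempotents_option_map_single_diag hrefl hjord).card_le
    (by rintro (_ | i); exacts [h, map_single_diag_sub_map_zero_ne_zero hrefl hinj i])
  simp at this

theorem exists_isUnit_map_single_diag_mul_eq (hrefl : ∀ i, ρ i i)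
    (hjord : ∀ X ∈ structuralMatrixAlgebra ρ, ∀ Y ∈ structuralMatrixAlgebra ρ,
      φ (njord X Y) = njord (φ X) (φ Y))
    (hinj : Set.InjOn φ (structuralMatrixAlgebra ρ)) :
    ∃ T : Matrix (Fin n) (Fin n) ℂ, IsUnit T ∧ ∀ i, φ (single i i 1) * T = T * single i i 1 := by
  have hzero := map_zero_of_njord hrefl hjord hinj
  refine OrthogonalIdempotents.exists_isUnit_mul_eq ?_ fun i => ?_
  · simpa [hzero, Function.comp_def] using
      (orthogonalIdempotents_option_map_single_diag hrefl hjord).embedding Function.Embedding.some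
  · simpa [hzero] using map_single_diag_sub_map_zero_ne_zero hrefl hinj i

theorem isNormalizedJordanMap_conj (hrefl : ∀ i, ρ i i) (htrans : ∀ i j k, ρ i j → ρ j k → ρ i k)
    (hjord : ∀ X ∈ structuralMatrixAlgebra ρ, ∀ Y ∈ structuralMatrixAlgebra ρ,
      φ (njord X Y) = njord (φ X) (φ Y))
    (hinj : Set.InjOn φ (structuralMatrixAlgebra ρ)) {T : Matrix (Fin n) (Fin n) ℂ}
    (hT : IsUnit T) (hPT : ∀ i, φ (single i i 1) * T = T * single i i 1) :
    IsNormalizedJordanMap ρ fun X => T⁻¹ * φ X * T where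
  refl := hrefl
  trans := htrans
  map_njord X hX Y hY := by
    rw [hjord X hX Y hY, njord_conj hT]
  injOn X hX Y hY h :=
    hinj hX hY ((isUnit_nonsing_inv_iff.mpr hT).mul_left_cancel (hT.mul_right_cancel h))
  map_zero := by
    simp [map_zero_of_njord hrefl hjord hinj]
  map_single_diag i := by
    rw [Matrix.mul_assoc, hPT, nonsing_inv_mul_cancel_left _ _ ((isUnit_iff_isUnit_det T).mp hT)]

end Normalization

/-- Structure of injective maps `φ : A_ρ → M_n(ℂ)` preserving the
normalized Jordan product, when every central class has at least 2 elements: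
there exist an invertible `T`, a transitive map `g : ρ → ℂ^×`, injective ring
endomorphisms `ω_C` of `ℂ` (one per central class), and a choice `ε_C ∈
{identity, transpose}` per central class (`ε i = true` meaning transpose on the
class of `i`), such that `φ(X) = T · (Σ_C (g*(ω_C(P_C X)))^{ε_C}) · T⁻¹`.
Entrywise, the middle matrix is `g i j · ω_{C(i)}(X i j)` at `(i,j) ∈ ρ` for
identity classes, and `g j i · ω_{C(j)}(X j i)` at the transposed position for
transpose classes, and `0` elsewhere. -/
theorem normalized_jordan_map_structure {n : ℕ} (ρ : Fin n → Fin n → Prop)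
    [DecidableRel ρ]
    (hrefl : ∀ i, ρ i i) (htrans : ∀ i j k, ρ i j → ρ j k → ρ i k)
    (hclass : ∀ i : Fin n, ∃ j, j ≠ i ∧ centralRel ρ i j)
    (φ : Matrix (Fin n) (Fin n) ℂ → Matrix (Fin n) (Fin n) ℂ)
    (hinj : Set.InjOn φ (structuralMatrixAlgebra ρ))
    (hjord : ∀ X ∈ structuralMatrixAlgebra ρ, ∀ Y ∈ structuralMatrixAlgebra ρ,
      φ (njord X Y) = njord (φ X) (φ Y)) :
    ∃ T : Matrix (Fin n) (Fin n) ℂ, IsUnit T ∧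
    ∃ g : Fin n → Fin n → ℂ,
      (∀ i j, ρ i j → g i j ≠ 0) ∧
      (∀ i j k, ρ i j → ρ j k → g i j * g j k = g i k) ∧
    ∃ ω : Fin n → (ℂ →+* ℂ),
      (∀ i, Function.Injective (ω i)) ∧
      (∀ i j, centralRel ρ i j → ω i = ω j) ∧
    ∃ ε : Fin n → Bool,
      (∀ i j, centralRel ρ i j → ε i = ε j) ∧
      ∀ X ∈ structuralMatrixAlgebra ρ,
        φ X = T * (Matrix.of fun i j =>
          if ε i then (if ρ j i then g j i * ω j (X j i) else 0)
          else (if ρ i j then g i j * ω i (X i j) else 0)) * T⁻¹ := by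
  obtain ⟨T, hT, hPT⟩ := exists_isUnit_map_single_diag_mul_eq hrefl hjord hinj
  set ψ := fun X => T⁻¹ * φ X * T
  have hψ : IsNormalizedJordanMap ρ ψ := isNormalizedJordanMap_conj hrefl htrans hjord hinj hT hPT
  have hadj : ∀ i, ∃ j ≠ i, ρ i j ∨ ρ j i := fun i =>
    let ⟨_, hj, h⟩ := hclass i
    exists_adj_of_centralRel h hj
  refine ⟨T, hT, fun i j => edgeCoeff ψ i j 1, fun i j hij => hψ.edgeCoeff_ne_zero hij one_ne_zero,
    fun i j k => hψ.edgeCoeff_mul_edgeCoeff, fun i => hψ.diagRingHom (hadj i),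
    fun i => (hψ.diagRingHom (hadj i)).injective, fun i j h => RingHom.ext fun c =>
      congrFun (eq_of_centralRel (fun _ _ hab _ => hψ.diagCoeff_eq_of_rel hab) h) c,
    vertexTransposes ψ ρ, fun i j h => hψ.vertexTransposes_eq_of_centralRel h, fun X hX => ?_⟩
  have hT' := (isUnit_iff_isUnit_det T).mp hT
  calc φ X = T * ψ X * T⁻¹ := by
        simp only [ψ, ← Matrix.mul_assoc, mul_nonsing_inv _ hT', Matrix.one_mul,
          mul_nonsing_inv_cancel_right _ _ hT']
    _ = _ := by rw [hψ.map_eq hadj hX]; rfl
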